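/- Let P be a simple polygon in the plane with perimeter b and area A, and suppose the total length of sides of P not parallel to any side of some fixed regular hexagon is at most b_*. Then 8√3·A ≤ (b + (2/√3 − 1)·b_*)². -/

import Mathlib

open MeasureTheory Classical

lemma tri_vol (x0 y0 l : ℝ) (hl : 0 ≤ l) :
    volume {z : Fin 2 → ℝ | x0 < z 0 ∧ y0 < z 1 ∧ z 0 + z 1 < x0 + y0 + l}
      = ENNReal.ofReal (l ^ 2 / 2) := by
  have hA : MeasurableSet {p : ℝ × ℝ | x0 < p.1 ∧ y0 < p.2 ∧ p.1 + p.2 < x0 + y0 + l} := by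
    apply MeasurableSet.inter
    · exact measurableSet_lt measurable_const measurable_fst
    apply MeasurableSet.inter
    · exact measurableSet_lt measurable_const measurable_snd
    · exact measurableSet_lt (measurable_fst.add measurable_snd) measurable_const
  have h1 : {z : Fin 2 → ℝ | x0 < z 0 ∧ y0 < z 1 ∧ z 0 + z 1 < x0 + y0 + l}
      = (MeasurableEquiv.finTwoArrow) ⁻¹'
        {p : ℝ × ℝ | x0 < p.1 ∧ y0 < p.2 ∧ p.1 + p.2 < x0 + y0 + l} := by
    rfl
  rw [h1, (volume_preserving_finTwoArrow ℝ).measure_preimage hA.nullMeasurableSet]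
  rw [Measure.volume_eq_prod, Measure.prod_apply hA]
  have h2 : ∀ p : ℝ,
      volume (Prod.mk p ⁻¹' {q : ℝ × ℝ | x0 < q.1 ∧ y0 < q.2 ∧ q.1 + q.2 < x0 + y0 + l})
        = (Set.Ioi x0).indicator (fun p => ENNReal.ofReal (x0 + l - p)) p := by
    intro p
    by_cases h : x0 < p
    · have : (Prod.mk p ⁻¹' {q : ℝ × ℝ | x0 < q.1 ∧ y0 < q.2 ∧ q.1 + q.2 < x0 + y0 + l})
          = Set.Ioo y0 (x0 + y0 + l - p) := by
        ext q
        simp only [Set.mem_preimage, Set.mem_setOf_eq, Set.mem_Ioo, h, true_and]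
        constructor
        · rintro ⟨hq1, hq2⟩; exact ⟨hq1, by linarith⟩
        · rintro ⟨hq1, hq2⟩; exact ⟨hq1, by linarith⟩
      rw [this, Real.volume_Ioo, Set.indicator_of_mem (Set.mem_Ioi.2 h)]
      congr 1; ring
    · have : (Prod.mk p ⁻¹' {q : ℝ × ℝ | x0 < q.1 ∧ y0 < q.2 ∧ q.1 + q.2 < x0 + y0 + l})
          = ∅ := by
        ext q
        simp only [Set.mem_preimage, Set.mem_setOf_eq, Set.mem_empty_iff_false, iff_false]
        rintro ⟨h', _⟩
        exact h h'
      rw [this, Set.indicator_of_notMem (by simpa using h)]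
      simp
  rw [lintegral_congr h2, lintegral_indicator measurableSet_Ioi]
  have hsplit : Set.Ioi x0 = Set.Ioc x0 (x0 + l) ∪ Set.Ioi (x0 + l) :=
    (Set.Ioc_union_Ioi_eq_Ioi (by linarith)).symm
  rw [hsplit, lintegral_union measurableSet_Ioi (Set.Ioc_disjoint_Ioi le_rfl)]
  have hz : ∫⁻ p in Set.Ioi (x0 + l), ENNReal.ofReal (x0 + l - p) = 0 := by
    rw [← lintegral_zero (μ := volume.restrict (Set.Ioi (x0 + l)))]
    apply setLIntegral_congr_fun measurableSet_Ioi
    exact fun p hp => by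
      rw [ENNReal.ofReal_eq_zero]; simp at hp; linarith
  rw [hz, add_zero]
  have hcont : Continuous (fun p : ℝ => x0 + l - p) := by fun_prop
  have hint : IntegrableOn (fun p : ℝ => x0 + l - p) (Set.Ioc x0 (x0 + l)) volume := by
    exact (hcont.integrableOn_Icc).mono_set Set.Ioc_subset_Icc_self
  rw [← ofReal_integral_eq_lintegral_ofReal hint]
  · congr 1
    rw [← intervalIntegral.integral_of_le (by linarith : x0 ≤ x0 + l)]
    have : ∫ x in x0..(x0 + l), (x0 + l - x) = l ^ 2 / 2 := by
      rw [intervalIntegral.integral_sub intervalIntegrable_const intervalIntegral.intervalIntegrable_id]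
      rw [intervalIntegral.integral_const, integral_id]
      rw [smul_eq_mul]
      ring
    rw [this]
  · rw [Filter.EventuallyLE, ae_restrict_iff' measurableSet_Ioc]
    exact ae_of_all _ fun p hp => by simp at hp ⊢; linarith [hp.2]

lemma clamp_eq (d a b : ℝ) (ha : 0 ≤ a) (hb : 0 ≤ b) :
    max 0 (min (min d a) b) = min (max d 0) (min a b) := by
  rcases le_total d 0 with h|h
  · rw [max_eq_right h, min_eq_left (le_min ha hb),
      max_eq_left (le_trans (le_trans (min_le_left _ _) (min_le_left _ _)) h)]
  · rw [max_eq_left h, min_assoc,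
      max_eq_right (le_min h (le_min ha hb))]

lemma scalar_band (a b c d1 d2 : ℝ) (ha : 0 ≤ a) (hb : 0 ≤ b) (hca : a ≤ c) (hcb : b ≤ c)
    (hd : d1 + d2 = a + b - c) :
    a*b ≤ (a+b+c)^2/12 + (max 0 (min (min d1 a) b))^2/2 + (max 0 (min (min d2 a) b))^2/2 := by
  rw [clamp_eq _ _ _ ha hb, clamp_eq _ _ _ ha hb]
  set m := min a b with hm
  have hm0 : 0 ≤ m := le_min ha hb
  have hL1 : (0:ℝ) ≤ min (max d1 0) m := le_min (le_max_right _ _) hm0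
  have hL2 : (0:ℝ) ≤ min (max d2 0) m := le_min (le_max_right _ _) hm0
  rcases le_total (a+b) c with hE|hE
  · nlinarith [sq_nonneg (a-b), sq_nonneg (min (max d1 0) m), sq_nonneg (min (max d2 0) m),
      mul_nonneg ha hb]
  · have hmcase : ∀ L2 : ℝ, 0 ≤ L2 → a*b ≤ (a+b+c)^2/12 + m^2/2 + L2^2/2 := by
      intro L2 h2
      rcases le_total a b with hab|hab
      · rw [hm, min_eq_left hab]
        nlinarith [sq_nonneg (b-a), sq_nonneg a, sq_nonneg L2]
      · rw [hm, min_eq_right hab]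
        nlinarith [sq_nonneg (a-b), sq_nonneg b, sq_nonneg L2]
    rcases le_total m (max d1 0) with h1|h1
    · rw [min_eq_right h1]
      exact hmcase _ hL2
    · rw [min_eq_left h1]
      rcases le_total m (max d2 0) with h2|h2
      · rw [min_eq_right h2]
        have := hmcase (max d1 0) (le_max_right _ _)
        linarith [this]
      · rw [min_eq_left h2]
        have e1 : d1 ≤ max d1 0 := le_max_left _ _
        have e2 : d2 ≤ max d2 0 := le_max_left _ _
        have e3 : (0:ℝ) ≤ max d1 0 := le_max_right _ _
        have e4 : (0:ℝ) ≤ max d2 0 := le_max_right _ _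
        have hsum : a + b - c ≤ max d1 0 + max d2 0 := by linarith
        have hsq : (a+b-c)^2 ≤ (max d1 0 + max d2 0)^2 := by nlinarith
        nlinarith [sq_nonneg (max d1 0 - max d2 0), sq_nonneg (a+b-2*c), sq_nonneg (a-b), hsq]

lemma tri_vol' (x0 y0 l : ℝ) (hl : 0 ≤ l) :
    volume {z : Fin 2 → ℝ | z 0 < x0 ∧ z 1 < y0 ∧ x0 + y0 - l < z 0 + z 1}
      = ENNReal.ofReal (l ^ 2 / 2) := by
  have hdet : LinearMap.det (Matrix.toLin' (-1 : Matrix (Fin 2) (Fin 2) ℝ)) = 1 := by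
    rw [LinearMap.det_toLin']
    rw [show (-1 : Matrix (Fin 2) (Fin 2) ℝ) = -(1 : Matrix (Fin 2) (Fin 2) ℝ) by norm_num]
    rw [Matrix.det_neg]
    simp
  have happ : ∀ z : Fin 2 → ℝ, ∀ i, (Matrix.toLin' (-1 : Matrix (Fin 2) (Fin 2) ℝ)) z i = - z i := by
    intro z i
    rw [Matrix.toLin'_apply,
      show (-1 : Matrix (Fin 2) (Fin 2) ℝ) = -(1 : Matrix (Fin 2) (Fin 2) ℝ) by norm_num,
      Matrix.neg_mulVec, Matrix.one_mulVec]
    rfl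
  have hset : {z : Fin 2 → ℝ | z 0 < x0 ∧ z 1 < y0 ∧ x0 + y0 - l < z 0 + z 1}
      = (Matrix.toLin' (-1 : Matrix (Fin 2) (Fin 2) ℝ)) ⁻¹'
        {z : Fin 2 → ℝ | -x0 < z 0 ∧ -y0 < z 1 ∧ z 0 + z 1 < -x0 + -y0 + l} := by
    ext z
    simp only [Set.mem_preimage, Set.mem_setOf_eq, happ]
    constructor
    · rintro ⟨h1, h2, h3⟩; exact ⟨by linarith, by linarith, by linarith⟩
    · rintro ⟨h1, h2, h3⟩; exact ⟨by linarith, by linarith, by linarith⟩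
  rw [hset, Measure.addHaar_preimage_linearMap volume (by rw [hdet]; norm_num),
    hdet, tri_vol (-x0) (-y0) l hl]
  simp

lemma band_vol (p1 p2 q1 q2 k1 k2 : ℝ) (hp : p1 ≤ p2) (hq : q1 ≤ q2) (hk : k1 ≤ k2)
    (hca : p2 - p1 ≤ k2 - k1) (hcb : q2 - q1 ≤ k2 - k1) :
    volume {z : Fin 2 → ℝ | z 0 ∈ Set.Icc p1 p2 ∧ z 1 ∈ Set.Icc q1 q2 ∧ z 0 + z 1 ∈ Set.Icc k1 k2}
      ≤ ENNReal.ofReal (((p2-p1) + (q2-q1) + (k2-k1))^2 / 12) := by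
  have ha : (0:ℝ) ≤ p2 - p1 := by linarith
  have hb : (0:ℝ) ≤ q2 - q1 := by linarith
  set a := p2 - p1 with hadef
  set b := q2 - q1 with hbdef
  set c := k2 - k1 with hcdef
  set l1 := max 0 (min (min (k1 - p1 - q1) a) b) with hl1def
  set l2 := max 0 (min (min (p2 + q2 - k2) a) b) with hl2def
  have hl1 : 0 ≤ l1 := le_max_left _ _
  have hl2 : 0 ≤ l2 := le_max_left _ _
  have hl1a : l1 ≤ a := max_le ha (le_trans (min_le_left _ _) (min_le_right _ _))
  have hl1b : l1 ≤ b := max_le hb (min_le_right _ _)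
  have hl2a : l2 ≤ a := max_le ha (le_trans (min_le_left _ _) (min_le_right _ _))
  have hl2b : l2 ≤ b := max_le hb (min_le_right _ _)
  have hl1d : 0 < l1 → l1 ≤ k1 - p1 - q1 := by
    intro h
    rcases le_total (min (min (k1 - p1 - q1) a) b) 0 with hx|hx
    · rw [hl1def, max_eq_left hx] at h; linarith
    · rw [hl1def, max_eq_right hx]
      exact le_trans (min_le_left _ _) (min_le_left _ _)
  have hl2d : 0 < l2 → l2 ≤ p2 + q2 - k2 := by
    intro h
    rcases le_total (min (min (p2 + q2 - k2) a) b) 0 with hx|hx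
    · rw [hl2def, max_eq_left hx] at h; linarith
    · rw [hl2def, max_eq_right hx]
      exact le_trans (min_le_left _ _) (min_le_left _ _)
  set D := {z : Fin 2 → ℝ | z 0 ∈ Set.Icc p1 p2 ∧ z 1 ∈ Set.Icc q1 q2 ∧ z 0 + z 1 ∈ Set.Icc k1 k2}
    with hDdef
  set T1 := {z : Fin 2 → ℝ | p1 < z 0 ∧ q1 < z 1 ∧ z 0 + z 1 < p1 + q1 + l1} with hT1def
  set T2 := {z : Fin 2 → ℝ | z 0 < p2 ∧ z 1 < q2 ∧ p2 + q2 - l2 < z 0 + z 1} with hT2def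
  set R := {z : Fin 2 → ℝ | z 0 ∈ Set.Icc p1 p2 ∧ z 1 ∈ Set.Icc q1 q2} with hRdef
  have hm0 : Measurable (fun z : Fin 2 → ℝ => z 0) := measurable_pi_apply 0
  have hm1 : Measurable (fun z : Fin 2 → ℝ => z 1) := measurable_pi_apply 1
  have hmD : MeasurableSet D := by
    apply MeasurableSet.inter (hm0 measurableSet_Icc)
    exact MeasurableSet.inter (hm1 measurableSet_Icc) ((hm0.add hm1) measurableSet_Icc)
  have hmT1 : MeasurableSet T1 := by
    apply MeasurableSet.inter (measurableSet_lt measurable_const hm0)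
    exact MeasurableSet.inter (measurableSet_lt measurable_const hm1)
      (measurableSet_lt (hm0.add hm1) measurable_const)
  have hmT2 : MeasurableSet T2 := by
    apply MeasurableSet.inter (measurableSet_lt hm0 measurable_const)
    exact MeasurableSet.inter (measurableSet_lt hm1 measurable_const)
      (measurableSet_lt measurable_const (hm0.add hm1))
  have hsub : (D ∪ T1) ∪ T2 ⊆ R := by
    rintro z (( ⟨h1, h2, _⟩ | ⟨h1, h2, h3⟩) | ⟨h1, h2, h3⟩)
    · exact ⟨h1, h2⟩
    · constructor
      · exact Set.mem_Icc.2 ⟨le_of_lt h1, by linarith⟩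
      · exact Set.mem_Icc.2 ⟨le_of_lt h2, by linarith⟩
    · constructor
      · exact Set.mem_Icc.2 ⟨by linarith, le_of_lt h1⟩
      · exact Set.mem_Icc.2 ⟨by linarith, le_of_lt h2⟩
  have hd1 : Disjoint D T1 := by
    rw [Set.disjoint_left]
    rintro z ⟨h1, h2, h3⟩ ⟨g1, g2, g3⟩
    have hpos : 0 < l1 := by
      have := h1.1; have := h2.1; simp at h3; linarith [h3.1]
    have := hl1d hpos
    simp at h3; linarith [h3.1]
  have hd2 : Disjoint D T2 := by
    rw [Set.disjoint_left]
    rintro z ⟨h1, h2, h3⟩ ⟨g1, g2, g3⟩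
    have hpos : 0 < l2 := by
      have := h1.2; have := h2.2; simp at h3; linarith [h3.2]
    have := hl2d hpos
    simp at h3; linarith [h3.2]
  have hd3 : Disjoint T1 T2 := by
    rw [Set.disjoint_left]
    rintro z ⟨g1, g2, g3⟩ ⟨f1, f2, f3⟩
    have hpos1 : 0 < l1 := by linarith
    have hpos2 : 0 < l2 := by linarith
    have := hl1d hpos1
    have := hl2d hpos2
    linarith
  have hRvol : volume R = ENNReal.ofReal (a * b) := by
    have : R = Set.univ.pi ![Set.Icc p1 p2, Set.Icc q1 q2] := by
      ext z
      simp only [hRdef, Set.mem_setOf_eq, Set.mem_pi, Set.mem_univ, forall_true_left,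
        Fin.forall_fin_two, Matrix.cons_val_zero, Matrix.cons_val_one, Matrix.head_cons,
        Set.mem_Icc]
    rw [this, volume_pi_pi, Fin.prod_univ_two]
    simp only [Matrix.cons_val_zero, Matrix.cons_val_one, Matrix.head_cons, Real.volume_Icc]
    rw [← ENNReal.ofReal_mul ha]
  have key : volume D + (ENNReal.ofReal (l1^2/2) + ENNReal.ofReal (l2^2/2))
      ≤ ENNReal.ofReal (a * b) := by
    rw [← tri_vol p1 q1 l1 hl1, ← tri_vol' p2 q2 l2 hl2, ← hRvol, ← add_assoc,
      ← measure_union hd1 hmT1,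
      ← measure_union (Set.disjoint_union_left.2 ⟨hd2, hd3⟩) hmT2]
    exact measure_mono hsub
  have hfin : (ENNReal.ofReal (l1^2/2) + ENNReal.ofReal (l2^2/2)) ≠ ⊤ := by
    simp
  have hscal : a * b ≤ (a+b+c)^2/12 + l1^2/2 + l2^2/2 :=
    scalar_band a b c (k1 - p1 - q1) (p2 + q2 - k2) ha hb hca hcb (by rw [hadef, hbdef, hcdef]; ring)
  have hr : ENNReal.ofReal (a * b)
      ≤ ENNReal.ofReal ((a+b+c)^2/12) + (ENNReal.ofReal (l1^2/2) + ENNReal.ofReal (l2^2/2)) := by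
    rw [← ENNReal.ofReal_add (by positivity) (by positivity), ← ENNReal.ofReal_add (by positivity) (by positivity)]
    apply ENNReal.ofReal_le_ofReal
    linarith
  have := le_trans key hr
  exact (ENNReal.add_le_add_iff_right hfin).1 this

open Fin.NatCast Fin.CommRing in
lemma cycle_width {n : ℕ} [NeZero n] (h : Fin n → ℝ) (a b : Fin n) :
    2 * (h a - h b) ≤ ∑ i : Fin n, |h (i + 1) - h i| := by
  have hnn : ∀ i : Fin n, 0 ≤ |h (i + 1) - h i| := fun i => abs_nonneg _
  by_cases hab : a = b
  · subst hab
    simpa using Finset.sum_nonneg (fun i _ => hnn i)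
  · have tel : ∀ (st : Fin n) (d : ℕ),
        h (st + (d : Fin n)) - h st
          = ∑ j ∈ Finset.range d, (h (st + (j : Fin n) + 1) - h (st + (j : Fin n))) := by
      intro st d
      induction d with
      | zero => simp
      | succ d ih =>
        rw [Finset.sum_range_succ, ← ih]
        push_cast
        ring_nf
    have path : ∀ (st : Fin n) (d : ℕ),
        |h (st + (d : Fin n)) - h st| ≤ ∑ j ∈ Finset.range d, |h (st + (j : Fin n) + 1) - h (st + (j : Fin n))| := by
      intro st d
      rw [tel st d]
      exact Finset.abs_sum_le_sum_abs _ _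
    set d1 := (a - b).val with hd1
    set d2 := (b - a).val with hd2
    have hsum : d1 + d2 = n := by
      have hz : ((a - b) + (b - a)).val = 0 := by
        rw [show (a - b) + (b - a) = 0 by ring]
        rfl
      rw [Fin.val_add] at hz
      have h1 : d1 < n := (a - b).isLt
      have h2 : d2 < n := (b - a).isLt
      have hne1 : d1 ≠ 0 := by
        intro hc
        have : a - b = 0 := by
          rw [← Fin.cast_val_eq_self (a - b), ← hd1, hc]; rfl
        exact hab (by rwa [sub_eq_zero] at this)
      obtain ⟨k, hk⟩ := Nat.dvd_of_mod_eq_zero hz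
      rcases k with _ | _ | k
      · have : d1 + d2 = 0 := hk
        omega
      · simpa using hk
      · exfalso
        have hk' : d1 + d2 = n * k + 2 * n := by rw [hk]; ring
        have := Nat.zero_le (n * k)
        omega
    have hb1 : b + (d1 : Fin n) = a := by
      rw [hd1, Fin.cast_val_eq_self]
      ring
    have ha2 : a + (d2 : Fin n) = b := by
      rw [hd2, Fin.cast_val_eq_self]
      ring
    have p1 : |h a - h b| ≤ ∑ j ∈ Finset.range d1, |h (b + (j : Fin n) + 1) - h (b + (j : Fin n))| := by
      have := path b d1
      rwa [hb1] at this
    have p2 : |h a - h b| ≤ ∑ j ∈ Finset.range d2, |h (a + (j : Fin n) + 1) - h (a + (j : Fin n))| := by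
      have := path a d2
      rwa [ha2, abs_sub_comm] at this
    have hinj : ∀ (st : Fin n) (d : ℕ), d ≤ n →
        ∀ x ∈ Finset.range d, ∀ y ∈ Finset.range d,
          st + (x : Fin n) = st + (y : Fin n) → x = y := by
      intro st d hd x hx y hy hxy
      have hx' : x < n := lt_of_lt_of_le (Finset.mem_range.1 hx) hd
      have hy' : y < n := lt_of_lt_of_le (Finset.mem_range.1 hy) hd
      have : (x : Fin n) = (y : Fin n) := by
        have := add_left_cancel hxy
        exact this
      calc x = ((x : Fin n)).val := (Fin.val_cast_of_lt hx').symm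
        _ = ((y : Fin n)).val := by rw [this]
        _ = y := Fin.val_cast_of_lt hy'
    set g : Fin n → ℝ := fun i => |h (i + 1) - h i| with hg
    set A1 := (Finset.range d1).image (fun j : ℕ => b + (j : Fin n)) with hA1
    set A2 := (Finset.range d2).image (fun j : ℕ => a + (j : Fin n)) with hA2
    have hs1 : ∑ i ∈ A1, g i = ∑ j ∈ Finset.range d1, g (b + (j : Fin n)) :=
      Finset.sum_image (hinj b d1 (by omega))
    have hs2 : ∑ i ∈ A2, g i = ∑ j ∈ Finset.range d2, g (a + (j : Fin n)) :=
      Finset.sum_image (hinj a d2 (by omega))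
    have hdisj : Disjoint A1 A2 := by
      rw [Finset.disjoint_left]
      rintro x hx1 hx2
      rw [hA1, Finset.mem_image] at hx1
      rw [hA2, Finset.mem_image] at hx2
      obtain ⟨j, hj, hjx⟩ := hx1
      obtain ⟨j', hj', hjx'⟩ := hx2
      rw [Finset.mem_range] at hj hj'
      have hee : (j : Fin n) = (a - b) + (j' : Fin n) := by
        have : b + (j : Fin n) = a + (j' : Fin n) := by rw [hjx, hjx']
        have h2 : (j : Fin n) = a + (j' : Fin n) - b := by
          rw [← this]; ring
        rw [h2]; ring
      have hval : j = (d1 + j') % n := by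
        have := congrArg Fin.val hee
        rwa [Fin.val_cast_of_lt (by omega), Fin.val_add, ← hd1,
          Fin.val_cast_of_lt (by omega)] at this
      rw [Nat.mod_eq_of_lt (by omega)] at hval
      omega
    have hsub : A1 ∪ A2 ⊆ Finset.univ := Finset.subset_univ _
    have : ∑ i ∈ A1, g i + ∑ i ∈ A2, g i ≤ ∑ i : Fin n, g i := by
      rw [← Finset.sum_union hdisj]
      exact Finset.sum_le_sum_of_subset_of_nonneg hsub (fun i _ _ => abs_nonneg _)
    have habs : 2 * (h a - h b) ≤ 2 * |h a - h b| := by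
      have := le_abs_self (h a - h b)
      linarith
    rw [hs1, hs2] at this
    calc 2 * (h a - h b) ≤ 2 * |h a - h b| := habs
      _ = |h a - h b| + |h a - h b| := by ring
      _ ≤ (∑ j ∈ Finset.range d1, |h (b + (j : Fin n) + 1) - h (b + (j : Fin n))|)
          + ∑ j ∈ Finset.range d2, |h (a + (j : Fin n) + 1) - h (a + (j : Fin n))| :=
        add_le_add p1 p2
      _ ≤ ∑ i : Fin n, g i := this
      _ = ∑ i : Fin n, |h (i + 1) - h i| := rfl

lemma lin_le (x y α β : ℝ) (h : α^2 + β^2 ≤ 4) : α*x + β*y ≤ 2 * Real.sqrt (x^2 + y^2) := by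
  have hs : 0 ≤ Real.sqrt (x^2 + y^2) := Real.sqrt_nonneg _
  have hs2 : Real.sqrt (x^2 + y^2) ^ 2 = x^2 + y^2 := Real.sq_sqrt (by positivity)
  nlinarith [sq_nonneg (α*y - β*x), sq_nonneg (α*x + β*y - 2*Real.sqrt (x^2+y^2)),
    sq_nonneg (α*x + β*y + 2*Real.sqrt (x^2+y^2)), sq_nonneg (α*x+β*y)]

lemma edge_gen (x y : ℝ) :
    |y| + |(-(Real.sqrt 3)/2*x + 1/2*y)| + |(-(Real.sqrt 3)/2*x - 1/2*y)|
      ≤ 2 * Real.sqrt (x^2 + y^2) := by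
  have h3 : Real.sqrt 3 ^ 2 = 3 := Real.sq_sqrt (by norm_num)
  have h3' : 0 ≤ Real.sqrt 3 := Real.sqrt_nonneg 3
  rcases abs_cases y with ⟨e0, _⟩ | ⟨e0, _⟩ <;>
    rcases abs_cases (-(Real.sqrt 3)/2*x + 1/2*y) with ⟨e1, _⟩ | ⟨e1, _⟩ <;>
    rcases abs_cases (-(Real.sqrt 3)/2*x - 1/2*y) with ⟨e2, _⟩ | ⟨e2, _⟩ <;>
    rw [e0, e1, e2] <;>
    [ (have := lin_le x y (-(Real.sqrt 3)) 1 (by nlinarith));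
      (have := lin_le x y 0 2 (by nlinarith));
      (have := lin_le x y 0 0 (by norm_num));
      (have := lin_le x y (Real.sqrt 3) 1 (by nlinarith));
      (have := lin_le x y (-(Real.sqrt 3)) (-1) (by nlinarith));
      (have := lin_le x y 0 0 (by norm_num));
      (have := lin_le x y 0 (-2) (by nlinarith));
      (have := lin_le x y (Real.sqrt 3) (-1) (by nlinarith))] <;>
    linarith

lemma edge_dir (t x y : ℝ)
    (h : (x = t ∧ y = 0) ∨ (x = t/2 ∧ y = Real.sqrt 3 * t/2) ∨ (x = -t/2 ∧ y = Real.sqrt 3 * t/2)) :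
    |y| + |(-(Real.sqrt 3)/2*x + 1/2*y)| + |(-(Real.sqrt 3)/2*x - 1/2*y)|
      ≤ Real.sqrt 3 * |t| := by
  have h3 : Real.sqrt 3 ^ 2 = 3 := Real.sq_sqrt (by norm_num)
  have h3' : 0 ≤ Real.sqrt 3 := Real.sqrt_nonneg 3
  have ht1 : t ≤ |t| := le_abs_self t
  have ht2 : -t ≤ |t| := neg_le_abs t
  have ht0 : 0 ≤ |t| := abs_nonneg t
  rcases h with ⟨hx, hy⟩ | ⟨hx, hy⟩ | ⟨hx, hy⟩ <;> rw [hx, hy]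
  · calc |(0:ℝ)| + |(-(Real.sqrt 3)/2*t + 1/2*0)| + |(-(Real.sqrt 3)/2*t - 1/2*0)|
        ≤ 0 + Real.sqrt 3 * |t| / 2 + Real.sqrt 3 * |t| / 2 := by
          apply add_le_add (add_le_add _ _) _
          · simp
          · exact abs_le.2 ⟨by nlinarith, by nlinarith⟩
          · exact abs_le.2 ⟨by nlinarith, by nlinarith⟩
      _ = Real.sqrt 3 * |t| := by ring
  · calc |Real.sqrt 3 * t/2| + |(-(Real.sqrt 3)/2*(t/2) + 1/2*(Real.sqrt 3 * t/2))|
          + |(-(Real.sqrt 3)/2*(t/2) - 1/2*(Real.sqrt 3 * t/2))|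
        ≤ Real.sqrt 3 * |t| / 2 + 0 + Real.sqrt 3 * |t| / 2 := by
          apply add_le_add (add_le_add _ _) _
          · exact abs_le.2 ⟨by nlinarith, by nlinarith⟩
          · apply le_of_eq
            rw [show (-(Real.sqrt 3)/2*(t/2) + 1/2*(Real.sqrt 3 * t/2)) = 0 by ring]
            simp
          · exact abs_le.2 ⟨by nlinarith, by nlinarith⟩
      _ = Real.sqrt 3 * |t| := by ring
  · calc |Real.sqrt 3 * t/2| + |(-(Real.sqrt 3)/2*(-t/2) + 1/2*(Real.sqrt 3 * t/2))|
          + |(-(Real.sqrt 3)/2*(-t/2) - 1/2*(Real.sqrt 3 * t/2))|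
        ≤ Real.sqrt 3 * |t| / 2 + Real.sqrt 3 * |t| / 2 + 0 := by
          apply add_le_add (add_le_add _ _) _
          · exact abs_le.2 ⟨by nlinarith, by nlinarith⟩
          · exact abs_le.2 ⟨by nlinarith, by nlinarith⟩
          · apply le_of_eq
            rw [show (-(Real.sqrt 3)/2*(-t/2) - 1/2*(Real.sqrt 3 * t/2)) = 0 by ring]
            simp
      _ = Real.sqrt 3 * |t| := by ring

lemma subset_halfspace {E : Type*} [NormedAddCommGroup E] [NormedSpace ℝ E]
    (S : Set E) (hSb : Bornology.IsBounded S) (f : E →L[ℝ] ℝ) (x0 : E) (hx0 : f x0 = 1)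
    (c : ℝ) (hf : frontier S ⊆ {x | f x ≤ c}) : ∀ z ∈ S, f z ≤ c := by
  obtain ⟨R, hR⟩ := hSb.subset_closedBall 0
  set U := interior S with hU
  set V := interior Sᶜ with hV
  set W := {x : E | c < f x} with hW
  have hWopen : IsOpen W := isOpen_lt continuous_const f.continuous
  have hWconv : Convex ℝ W := by
    exact convex_halfSpace_gt (LinearMap.isLinear (f : E →ₗ[ℝ] ℝ)) c
  have hWpre : IsPreconnected W := hWconv.isPreconnected
  have hWsub : W ⊆ U ∪ V := by
    intro x hx
    have hxf : x ∉ frontier S := by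
      intro hc
      have h1 : f x ≤ c := hf hc
      have h2 : c < f x := hx
      linarith
    by_cases hcl : x ∈ closure S
    · left
      rw [hU]
      have : frontier S = closure S \ interior S := rfl
      by_contra hnot
      exact hxf ⟨hcl, hnot⟩
    · right
      rw [hV, interior_compl]
      exact hcl
  have hdisj : Disjoint U V :=
    Set.disjoint_of_subset interior_subset interior_subset disjoint_compl_right
  rcases IsPreconnected.subset_or_subset isOpen_interior isOpen_interior hdisj hWsub hWpre with hcase | hcase
  · exfalso
    have hx0n : x0 ≠ 0 := by
      intro hc
      rw [hc] at hx0
      simp at hx0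
    have hn0 : 0 < ‖x0‖ := norm_pos_iff.2 hx0n
    set t := max (|c| + 1) ((|R| + 1) / ‖x0‖) with htdef
    have ht1 : |c| + 1 ≤ t := le_max_left _ _
    have ht2 : (|R| + 1) / ‖x0‖ ≤ t := le_max_right _ _
    have hmem : t • x0 ∈ W := by
      rw [hW, Set.mem_setOf_eq, ContinuousLinearMap.map_smul, hx0, smul_eq_mul, mul_one]
      have := le_abs_self c
      linarith
    have hball : t • x0 ∈ Metric.closedBall (0:E) R :=
      hR (interior_subset (hcase hmem))
    rw [Metric.mem_closedBall, dist_zero_right, norm_smul, Real.norm_eq_abs] at hball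
    have htpos : 0 < t := lt_of_lt_of_le (by positivity) ht1
    have : |R| + 1 ≤ t * ‖x0‖ := by
      rw [div_le_iff₀ hn0] at ht2
      linarith
    rw [abs_of_pos htpos] at hball
    have := le_abs_self R
    linarith
  · intro z hz
    by_contra hcz
    have : z ∈ V := hcase (not_le.1 hcz)
    exact (interior_subset this) hz

lemma slab_volume (S : Set (EuclideanSpace ℝ (Fin 2))) (g0 g1 h0 h1 a1 b1 a2 b2 a3 b3 : ℝ)
    (hdet : |g0 * h1 - g1 * h0| = Real.sqrt 3 / 2)
    (hS : ∀ x ∈ S, (g0 * x 0 + g1 * x 1) ∈ Set.Icc a1 b1 ∧ (h0 * x 0 + h1 * x 1) ∈ Set.Icc a2 b2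
      ∧ ((g0 + h0) * x 0 + (g1 + h1) * x 1) ∈ Set.Icc a3 b3)
    (h12 : a1 ≤ b1) (h22 : a2 ≤ b2) (h32 : a3 ≤ b3)
    (hw1 : b1 - a1 ≤ b3 - a3) (hw2 : b2 - a2 ≤ b3 - a3) :
    volume S ≤ ENNReal.ofReal (2 / Real.sqrt 3 * (((b1-a1) + (b2-a2) + (b3-a3))^2 / 12)) := by
  have h3 : (0:ℝ) < Real.sqrt 3 := Real.sqrt_pos.2 (by norm_num)
  set M : Matrix (Fin 2) (Fin 2) ℝ := !![g0, g1; h0, h1] with hM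
  have hdetM : M.det = g0 * h1 - g1 * h0 := by
    rw [hM, Matrix.det_fin_two_of]
  set Φ := Matrix.toLin' M with hΦdef
  have hdet1 : LinearMap.det Φ = g0 * h1 - g1 * h0 := by
    rw [hΦdef, LinearMap.det_toLin', hdetM]
  have hdet0 : LinearMap.det Φ ≠ 0 := by
    rw [hdet1]
    intro hc
    rw [hc] at hdet
    simp at hdet
    linarith
  have hΦ : ∀ y : Fin 2 → ℝ, Φ y 0 = g0 * y 0 + g1 * y 1 ∧ Φ y 1 = h0 * y 0 + h1 * y 1 := by
    intro y
    constructor <;>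
      simp [hΦdef, hM, Matrix.toLin'_apply, Matrix.mulVec, dotProduct, Fin.sum_univ_two]
  set Dh := {z : Fin 2 → ℝ | z 0 ∈ Set.Icc a1 b1 ∧ z 1 ∈ Set.Icc a2 b2 ∧ z 0 + z 1 ∈ Set.Icc a3 b3}
    with hDh
  have hm0 : Measurable (fun z : Fin 2 → ℝ => z 0) := measurable_pi_apply 0
  have hm1 : Measurable (fun z : Fin 2 → ℝ => z 1) := measurable_pi_apply 1
  have hmDh : MeasurableSet Dh := by
    apply MeasurableSet.inter (hm0 measurableSet_Icc)
    exact MeasurableSet.inter (hm1 measurableSet_Icc) ((hm0.add hm1) measurableSet_Icc)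
  have hmΦ : Measurable Φ := Φ.continuous_of_finiteDimensional.measurable
  have hsub : S ⊆ (MeasurableEquiv.toLp 2 (Fin 2 → ℝ)).symm ⁻¹' (Φ ⁻¹' Dh) := by
    intro x hx
    obtain ⟨m1, m2, m3⟩ := hS x hx
    have he : ∀ i, (MeasurableEquiv.toLp 2 (Fin 2 → ℝ)).symm x i = x i := fun i => rfl
    refine ⟨?_, ?_, ?_⟩
    · rw [(hΦ _).1, he 0, he 1]; exact m1
    · rw [(hΦ _).2, he 0, he 1]; exact m2
    · rw [(hΦ _).1, (hΦ _).2, he 0, he 1]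
      have : g0 * x 0 + g1 * x 1 + (h0 * x 0 + h1 * x 1) = (g0 + h0) * x 0 + (g1 + h1) * x 1 := by
        ring
      rw [this]; exact m3
  have hband := band_vol a1 b1 a2 b2 a3 b3 h12 h22 h32 hw1 hw2
  calc volume S ≤ volume ((MeasurableEquiv.toLp 2 (Fin 2 → ℝ)).symm ⁻¹' (Φ ⁻¹' Dh)) :=
        measure_mono hsub
    _ = volume (Φ ⁻¹' Dh) :=
        (EuclideanSpace.volume_preserving_symm_measurableEquiv_toLp (Fin 2)).measure_preimage
          (hmΦ hmDh).nullMeasurableSet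
    _ = ENNReal.ofReal |(LinearMap.det Φ)⁻¹| * volume Dh :=
        Measure.addHaar_preimage_linearMap volume hdet0 Dh
    _ ≤ ENNReal.ofReal (2 / Real.sqrt 3) * ENNReal.ofReal ((((b1-a1) + (b2-a2) + (b3-a3))^2 / 12)) := by
        apply mul_le_mul'
        · apply le_of_eq
          congr 1
          rw [hdet1, abs_inv, hdet]
          rw [inv_div]
        · exact hband
    _ = ENNReal.ofReal (2 / Real.sqrt 3 * (((b1-a1) + (b2-a2) + (b3-a3))^2 / 12)) := by
        rw [← ENNReal.ofReal_mul (by positivity)]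

lemma slab_sup {n : ℕ} [NeZero n] (S : Set (EuclideanSpace ℝ (Fin 2)))
    (hSb : Bornology.IsBounded S) (v : Fin n → EuclideanSpace ℝ (Fin 2))
    (hS : frontier S = ⋃ i, segment ℝ (v i) (v (i + 1)))
    (NE : (Finset.univ : Finset (Fin n)).Nonempty)
    (f : EuclideanSpace ℝ (Fin 2) →L[ℝ] ℝ) (x0 : EuclideanSpace ℝ (Fin 2)) (hx0 : f x0 = 1) :
    ∀ x ∈ S, f x ≤ Finset.univ.sup' NE (fun i => f (v i)) := by
  apply subset_halfspace S hSb f x0 hx0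
  rw [hS]
  apply Set.iUnion_subset
  intro i
  have hc : Convex ℝ {x | f x ≤ Finset.univ.sup' NE (fun i => f (v i))} :=
    convex_halfSpace_le (LinearMap.isLinear f.toLinearMap) _
  apply hc.segment_subset
  · show f (v i) ≤ _
    exact Finset.le_sup' (fun i => f (v i)) (Finset.mem_univ i)
  · show f (v (i+1)) ≤ _
    exact Finset.le_sup' (fun i => f (v i)) (Finset.mem_univ (i+1))

lemma direction_data {n : ℕ} [NeZero n] (S : Set (EuclideanSpace ℝ (Fin 2)))
    (hSb : Bornology.IsBounded S) (v : Fin n → EuclideanSpace ℝ (Fin 2))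
    (hS : frontier S = ⋃ i, segment ℝ (v i) (v (i + 1)))
    (NE : (Finset.univ : Finset (Fin n)).Nonempty)
    (f : EuclideanSpace ℝ (Fin 2) →L[ℝ] ℝ) (x0 : EuclideanSpace ℝ (Fin 2))
    (hx0 : f x0 = 1) (x1 : EuclideanSpace ℝ (Fin 2)) (hx1 : f x1 = -1) :
    ∃ C D : ℝ, (∀ x ∈ S, f x ∈ Set.Icc D C) ∧ (∀ i, f (v i) ∈ Set.Icc D C) ∧
      2 * (C - D) ≤ ∑ i : Fin n, |f (v (i + 1) - v i)| := by
  set C := Finset.univ.sup' NE (fun i => f (v i)) with hC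
  set E := Finset.univ.sup' NE (fun i => (-f) (v i)) with hE
  have hub : ∀ x ∈ S, f x ≤ C := slab_sup S hSb v hS NE f x0 hx0
  have hlb : ∀ x ∈ S, (-f) x ≤ E := slab_sup S hSb v hS NE (-f) x1 (by simp [hx1])
  refine ⟨C, -E, ?_, ?_, ?_⟩
  · intro x hx
    refine ⟨?_, hub x hx⟩
    have := hlb x hx
    simp only [ContinuousLinearMap.neg_apply] at this
    linarith
  · intro i
    constructor
    · have : (-f) (v i) ≤ E := Finset.le_sup' (fun i => (-f) (v i)) (Finset.mem_univ i)
      simp only [ContinuousLinearMap.neg_apply] at this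
      linarith
    · exact Finset.le_sup' (fun i => f (v i)) (Finset.mem_univ i)
  · obtain ⟨ia, _, hia⟩ := Finset.exists_mem_eq_sup' NE (fun i => f (v i))
    obtain ⟨ib, _, hib⟩ := Finset.exists_mem_eq_sup' NE (fun i => (-f) (v i))
    have h := cycle_width (fun i => f (v i)) ia ib
    have e2 : E = -(f (v ib)) := by rw [hE, hib]; simp
    calc 2 * (C - -E) = 2 * (f (v ia) - f (v ib)) := by rw [hC, hia, e2]; ring
      _ ≤ ∑ i : Fin n, |f (v (i + 1)) - f (v i)| := h
      _ = ∑ i : Fin n, |f (v (i + 1) - v i)| := by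
          apply Finset.sum_congr rfl
          intro i _
          rw [map_sub]

noncomputable def hexDir (k : Fin 3) : EuclideanSpace ℝ (Fin 2) :=
  (WithLp.equiv 2 (Fin 2 → ℝ)).symm
    ![Real.cos ((k : ℝ) * Real.pi / 3), Real.sin ((k : ℝ) * Real.pi / 3)]

set_option maxHeartbeats 1600000 in
/-- Isoperimetric inequality for simple polygons most of whose sides are parallel to the
sides of a fixed regular hexagon.  The polygon is given by its cyclically ordered vertices
`v : Fin (m+3) → ℝ²` (at least three of them); simplicity says two sides intersect only in
common endpoints, and `S` is the (bounded) region enclosed by the polygon, i.e. the bounded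
set whose frontier is the union of the sides.  If the total length of the sides not parallel
to any side of the fixed regular hexagon is at most `b_*`, then
`8√3·A ≤ (b + (2/√3 − 1)·b_*)²`. -/
theorem polygon_isoperimetric (m : ℕ) (v : Fin (m + 3) → EuclideanSpace ℝ (Fin 2))
    (hinj : Function.Injective v)
    (hsimple : ∀ i j : Fin (m + 3), i ≠ j →
      segment ℝ (v i) (v (i + 1)) ∩ segment ℝ (v j) (v (j + 1)) ⊆
        ({v i, v (i + 1)} : Set (EuclideanSpace ℝ (Fin 2))) ∩ {v j, v (j + 1)})
    (S : Set (EuclideanSpace ℝ (Fin 2))) (hSb : Bornology.IsBounded S)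
    (hS : frontier S = ⋃ i : Fin (m + 3), segment ℝ (v i) (v (i + 1)))
    (b bstar : ℝ)
    (hb : b = ∑ i : Fin (m + 3), dist (v i) (v (i + 1)))
    (hbstar : ∑ i ∈ Finset.univ.filter
        (fun i : Fin (m + 3) => ¬ ∃ (k : Fin 3) (t : ℝ), v (i + 1) - v i = t • hexDir k),
        dist (v i) (v (i + 1)) ≤ bstar) :
    8 * Real.sqrt 3 * (volume S).toReal ≤ (b + (2 / Real.sqrt 3 - 1) * bstar) ^ 2 := by
  classical
  have NE : (Finset.univ : Finset (Fin (m+3))).Nonempty := ⟨0, Finset.mem_univ 0⟩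
  have h3 : (0:ℝ) < Real.sqrt 3 := Real.sqrt_pos.2 (by norm_num)
  have h3sq : Real.sqrt 3 ^ 2 = 3 := Real.sq_sqrt (by norm_num)
  have h3le2 : Real.sqrt 3 ≤ 2 := by nlinarith
  have h3ge : (3:ℝ)/2 ≤ Real.sqrt 3 := by nlinarith
  -- the three continuous linear functionals (normals to the hexagon directions)
  set f0 : EuclideanSpace ℝ (Fin 2) →L[ℝ] ℝ := EuclideanSpace.proj (1 : Fin 2) with hf0
  set f1 : EuclideanSpace ℝ (Fin 2) →L[ℝ] ℝ :=
    (-(Real.sqrt 3)/2) • EuclideanSpace.proj (0 : Fin 2)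
      + (1/2 : ℝ) • EuclideanSpace.proj (1 : Fin 2) with hf1
  set f2 : EuclideanSpace ℝ (Fin 2) →L[ℝ] ℝ :=
    (-(Real.sqrt 3)/2) • EuclideanSpace.proj (0 : Fin 2)
      + (-(1/2) : ℝ) • EuclideanSpace.proj (1 : Fin 2) with hf2
  have happ0 : ∀ x : EuclideanSpace ℝ (Fin 2), f0 x = x 1 := fun x => rfl
  have happ1 : ∀ x : EuclideanSpace ℝ (Fin 2), f1 x = -(Real.sqrt 3)/2 * x 0 + 1/2 * x 1 :=
    fun x => rfl
  have happ2 : ∀ x : EuclideanSpace ℝ (Fin 2), f2 x = -(Real.sqrt 3)/2 * x 0 - 1/2 * x 1 := by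
    intro x
    show -(Real.sqrt 3)/2 * x 0 + (-(1/2):ℝ) * x 1 = _
    ring
  -- witnesses
  set w0 : EuclideanSpace ℝ (Fin 2) := (WithLp.equiv 2 (Fin 2 → ℝ)).symm ![0, 1] with hw0def
  set w1 : EuclideanSpace ℝ (Fin 2) :=
    (WithLp.equiv 2 (Fin 2 → ℝ)).symm ![-(Real.sqrt 3)/2, 1/2] with hw1def
  set w2 : EuclideanSpace ℝ (Fin 2) :=
    (WithLp.equiv 2 (Fin 2 → ℝ)).symm ![-(Real.sqrt 3)/2, -(1/2)] with hw2def
  have hwit0 : f0 w0 = 1 := by norm_num [happ0]; rfl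
  have hwit0' : f0 (-w0) = -1 := by rw [map_neg, hwit0]
  have hwit1 : f1 w1 = 1 := by
    rw [happ1]
    show -(Real.sqrt 3)/2 * (-(Real.sqrt 3)/2) + 1/2 * (1/2) = 1
    linear_combination h3sq / 4
  have hwit1' : f1 (-w1) = -1 := by rw [map_neg, hwit1]
  have hwit2 : f2 w2 = 1 := by
    rw [happ2]
    show -(Real.sqrt 3)/2 * (-(Real.sqrt 3)/2) - 1/2 * (-(1/2)) = 1
    linear_combination h3sq / 4
  have hwit2' : f2 (-w2) = -1 := by rw [map_neg, hwit2]
  -- slabs and widths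
  obtain ⟨C0, D0, hmem0, hv0, hcw0⟩ := direction_data S hSb v hS NE f0 w0 hwit0 (-w0) hwit0'
  obtain ⟨C1, D1, hmem1, hv1, hcw1⟩ := direction_data S hSb v hS NE f1 w1 hwit1 (-w1) hwit1'
  obtain ⟨C2, D2, hmem2, hv2, hcw2⟩ := direction_data S hSb v hS NE f2 w2 hwit2 (-w2) hwit2'
  have hDC0 : D0 ≤ C0 := le_trans (hv0 0).1 (hv0 0).2
  have hDC1 : D1 ≤ C1 := le_trans (hv1 0).1 (hv1 0).2
  have hDC2 : D2 ≤ C2 := le_trans (hv2 0).1 (hv2 0).2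
  -- edge estimates
  have hdist : ∀ i : Fin (m+3), dist (v i) (v (i + 1))
      = Real.sqrt (((v (i+1) - v i) 0)^2 + ((v (i+1) - v i) 1)^2) := by
    intro i
    rw [EuclideanSpace.dist_eq, Fin.sum_univ_two]
    have hj : ∀ j : Fin 2, dist (v i j) (v (i+1) j)^2 = ((v (i+1) - v i) j)^2 := by
      intro j
      rw [Real.dist_eq, sq_abs]
      show _ = (v (i+1) j - v i j)^2
      ring
    rw [hj 0, hj 1]
  have hgen : ∀ i : Fin (m+3),
      |f0 (v (i+1) - v i)| + |f1 (v (i+1) - v i)| + |f2 (v (i+1) - v i)|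
        ≤ 2 * dist (v i) (v (i + 1)) := by
    intro i
    rw [happ0, happ1, happ2, hdist i]
    exact edge_gen _ _
  have hexnorm : ∀ k : Fin 3, ‖hexDir k‖ = 1 := by
    intro k
    rw [EuclideanSpace.norm_eq, Fin.sum_univ_two]
    have h0 : (hexDir k) 0 = Real.cos ((k : ℝ) * Real.pi / 3) := rfl
    have h1 : (hexDir k) 1 = Real.sin ((k : ℝ) * Real.pi / 3) := rfl
    rw [h0, h1, Real.norm_eq_abs, Real.norm_eq_abs, sq_abs, sq_abs, Real.cos_sq_add_sin_sq,
      Real.sqrt_one]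
  have hcon : ∀ i : Fin (m+3), (∃ (k : Fin 3) (t : ℝ), v (i + 1) - v i = t • hexDir k) →
      |f0 (v (i+1) - v i)| + |f1 (v (i+1) - v i)| + |f2 (v (i+1) - v i)|
        ≤ Real.sqrt 3 * dist (v i) (v (i + 1)) := by
    rintro i ⟨k, t, he⟩
    have hd : dist (v i) (v (i + 1)) = |t| := by
      rw [dist_comm, dist_eq_norm, he, norm_smul, Real.norm_eq_abs, hexnorm k, mul_one]
    rw [happ0, happ1, happ2, hd, he]
    fin_cases k
    · apply edge_dir t
      left
      constructor
      · show t * Real.cos (((0 : Fin 3) : ℝ) * Real.pi / 3) = t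
        norm_num
      · show t * Real.sin (((0 : Fin 3) : ℝ) * Real.pi / 3) = 0
        norm_num
    · apply edge_dir t
      right; left
      constructor
      · show t * Real.cos (((1 : Fin 3) : ℝ) * Real.pi / 3) = t / 2
        rw [show (((1 : Fin 3) : ℝ)) = 1 by norm_num, one_mul, Real.cos_pi_div_three]
        ring
      · show t * Real.sin (((1 : Fin 3) : ℝ) * Real.pi / 3) = Real.sqrt 3 * t / 2
        rw [show (((1 : Fin 3) : ℝ)) = 1 by norm_num, one_mul, Real.sin_pi_div_three]
        ring
    · apply edge_dir t
      right; right
      constructor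
      · show t * Real.cos (((2 : Fin 3) : ℝ) * Real.pi / 3) = -t / 2
        rw [show (((2 : Fin 3) : ℝ)) = 2 by norm_num,
          show (2:ℝ) * Real.pi / 3 = Real.pi - Real.pi/3 by ring, Real.cos_pi_sub,
          Real.cos_pi_div_three]
        ring
      · show t * Real.sin (((2 : Fin 3) : ℝ) * Real.pi / 3) = Real.sqrt 3 * t / 2
        rw [show (((2 : Fin 3) : ℝ)) = 2 by norm_num,
          show (2:ℝ) * Real.pi / 3 = Real.pi - Real.pi/3 by ring, Real.sin_pi_sub,
          Real.sin_pi_div_three]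
        ring
  -- total projected perimeter
  set lam := ∑ i ∈ Finset.univ.filter
      (fun i : Fin (m + 3) => ¬ ∃ (k : Fin 3) (t : ℝ), v (i + 1) - v i = t • hexDir k),
      dist (v i) (v (i + 1)) with hlamdef
  have hlam0 : 0 ≤ lam := Finset.sum_nonneg fun i _ => dist_nonneg
  have hlamb : lam ≤ bstar := hbstar
  have hb0 : 0 ≤ b := by
    rw [hb]; exact Finset.sum_nonneg fun i _ => dist_nonneg
  have htot : 2*((C0-D0) + (C1-D1) + (C2-D2)) ≤ Real.sqrt 3 * b + (2 - Real.sqrt 3) * lam := by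
    have hsplitb : lam + ∑ i ∈ Finset.univ.filter
        (fun i : Fin (m + 3) => ¬¬ ∃ (k : Fin 3) (t : ℝ), v (i + 1) - v i = t • hexDir k),
        dist (v i) (v (i + 1)) = b := by
      rw [hlamdef, hb]
      exact Finset.sum_filter_add_sum_filter_not _ _ _
    have hsplit : ∑ i : Fin (m+3),
        (|f0 (v (i+1) - v i)| + |f1 (v (i+1) - v i)| + |f2 (v (i+1) - v i)|)
        ≤ Real.sqrt 3 * b + (2 - Real.sqrt 3) * lam := by
      rw [← Finset.sum_filter_add_sum_filter_not Finset.univ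
        (fun i : Fin (m + 3) => ¬ ∃ (k : Fin 3) (t : ℝ), v (i + 1) - v i = t • hexDir k)]
      have hA : ∑ i ∈ Finset.univ.filter
          (fun i : Fin (m + 3) => ¬ ∃ (k : Fin 3) (t : ℝ), v (i + 1) - v i = t • hexDir k),
          (|f0 (v (i+1) - v i)| + |f1 (v (i+1) - v i)| + |f2 (v (i+1) - v i)|)
          ≤ 2 * lam := by
        rw [hlamdef, Finset.mul_sum]
        exact Finset.sum_le_sum fun i _ => hgen i
      have hB : ∑ i ∈ Finset.univ.filter
          (fun i : Fin (m + 3) => ¬¬ ∃ (k : Fin 3) (t : ℝ), v (i + 1) - v i = t • hexDir k),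
          (|f0 (v (i+1) - v i)| + |f1 (v (i+1) - v i)| + |f2 (v (i+1) - v i)|)
          ≤ Real.sqrt 3 * (b - lam) := by
        have : Real.sqrt 3 * (b - lam) = ∑ i ∈ Finset.univ.filter
            (fun i : Fin (m + 3) => ¬¬ ∃ (k : Fin 3) (t : ℝ), v (i + 1) - v i = t • hexDir k),
            Real.sqrt 3 * dist (v i) (v (i + 1)) := by
          rw [← Finset.mul_sum]
          congr 1
          linarith [hsplitb]
        rw [this]
        apply Finset.sum_le_sum
        intro i hi
        exact hcon i (not_not.1 (Finset.mem_filter.1 hi).2)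
      linarith
    have hadd : ∑ i : Fin (m+3), |f0 (v (i+1) - v i)| + ∑ i : Fin (m+3), |f1 (v (i+1) - v i)|
        + ∑ i : Fin (m+3), |f2 (v (i+1) - v i)|
        = ∑ i : Fin (m+3),
          (|f0 (v (i+1) - v i)| + |f1 (v (i+1) - v i)| + |f2 (v (i+1) - v i)|) := by
      rw [← Finset.sum_add_distrib, ← Finset.sum_add_distrib]
    linarith [hcw0, hcw1, hcw2]
  -- volume bound, case analysis on which width is largest
  -- volume bound: case analysis on which slab width is largest
  have hvolS : volume S ≤ ENNReal.ofReal
      (2 / Real.sqrt 3 * ((((C0-D0) + (C1-D1) + (C2-D2)))^2 / 12)) := by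
    by_cases hc1 : (C0-D0) ≤ (C1-D1) ∧ (C2-D2) ≤ (C1-D1)
    · have habs : |(0:ℝ) * (-(1/2)) - 1 * (-(Real.sqrt 3)/2)| = Real.sqrt 3 / 2 := by
        rw [show (0:ℝ) * (-(1/2)) - 1 * (-(Real.sqrt 3)/2) = Real.sqrt 3/2 by ring]
        exact abs_of_nonneg (by positivity)
      have hmem : ∀ x ∈ S, ((0:ℝ) * x 0 + 1 * x 1) ∈ Set.Icc D0 C0
          ∧ ((-(Real.sqrt 3)/2) * x 0 + (-(1/2)) * x 1) ∈ Set.Icc D2 C2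
          ∧ (((0:ℝ) + -(Real.sqrt 3)/2) * x 0 + (1 + -(1/2)) * x 1) ∈ Set.Icc D1 C1 := by
        intro x hx
        refine ⟨?_, ?_, ?_⟩
        · rw [show (0:ℝ) * x 0 + 1 * x 1 = f0 x by rw [happ0]; ring]
          exact hmem0 x hx
        · rw [show (-(Real.sqrt 3)/2) * x 0 + (-(1/2)) * x 1 = f2 x by rw [happ2]; ring]
          exact hmem2 x hx
        · rw [show ((0:ℝ) + -(Real.sqrt 3)/2) * x 0 + (1 + -(1/2)) * x 1 = f1 x by
            rw [happ1]; ring]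
          exact hmem1 x hx
      have h := slab_volume S 0 1 (-(Real.sqrt 3)/2) (-(1/2)) D0 C0 D2 C2 D1 C1 habs hmem
        hDC0 hDC2 hDC1 hc1.1 hc1.2
      rw [show (C0-D0) + (C2-D2) + (C1-D1) = (C0-D0) + (C1-D1) + (C2-D2) by ring] at h
      exact h
    · by_cases hc2 : (C1-D1) ≤ (C0-D0) ∧ (C2-D2) ≤ (C0-D0)
      · have habs : |(-(Real.sqrt 3)/2) * (1/2) - (1/2) * (Real.sqrt 3/2)| = Real.sqrt 3 / 2 := by
          rw [show (-(Real.sqrt 3)/2) * (1/2) - (1/2) * (Real.sqrt 3/2) = -(Real.sqrt 3/2) by ring,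
            abs_neg]
          exact abs_of_nonneg (by positivity)
        have hmem : ∀ x ∈ S, ((-(Real.sqrt 3)/2) * x 0 + (1/2) * x 1) ∈ Set.Icc D1 C1
            ∧ ((Real.sqrt 3/2) * x 0 + (1/2) * x 1) ∈ Set.Icc (-C2) (-D2)
            ∧ (((-(Real.sqrt 3)/2) + Real.sqrt 3/2) * x 0 + ((1:ℝ)/2 + 1/2) * x 1)
              ∈ Set.Icc D0 C0 := by
          intro x hx
          refine ⟨?_, ?_, ?_⟩
          · rw [show (-(Real.sqrt 3)/2) * x 0 + (1/2) * x 1 = f1 x by rw [happ1]]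
            exact hmem1 x hx
          · rw [show (Real.sqrt 3/2) * x 0 + (1/2) * x 1 = -(f2 x) by rw [happ2]; ring]
            have h2 := hmem2 x hx
            exact ⟨neg_le_neg h2.2, neg_le_neg h2.1⟩
          · rw [show ((-(Real.sqrt 3)/2) + Real.sqrt 3/2) * x 0 + ((1:ℝ)/2 + 1/2) * x 1 = f0 x by
              rw [happ0]; ring]
            exact hmem0 x hx
        have h := slab_volume S (-(Real.sqrt 3)/2) (1/2) (Real.sqrt 3/2) (1/2) D1 C1 (-C2) (-D2)
          D0 C0 habs hmem hDC1 (by linarith) hDC0 hc2.1 (by linarith)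
        rw [show (C1-D1) + (-D2 - -C2) + (C0-D0) = (C0-D0) + (C1-D1) + (C2-D2) by ring] at h
        exact h
      · have hc3 : (C0-D0) ≤ (C2-D2) ∧ (C1-D1) ≤ (C2-D2) := by
          push_neg at hc1 hc2
          rcases le_total (C0-D0) (C1-D1) with h|h
          · have h' := hc1 h
            exact ⟨by linarith, by linarith⟩
          · have h' := hc2 h
            exact ⟨by linarith, by linarith⟩
        have habs : |(-(Real.sqrt 3)/2) * (-1) - (1/2) * 0| = Real.sqrt 3 / 2 := by
          rw [show (-(Real.sqrt 3)/2) * (-1:ℝ) - (1/2) * 0 = Real.sqrt 3/2 by ring]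
          exact abs_of_nonneg (by positivity)
        have hmem : ∀ x ∈ S, ((-(Real.sqrt 3)/2) * x 0 + (1/2) * x 1) ∈ Set.Icc D1 C1
            ∧ ((0:ℝ) * x 0 + (-1) * x 1) ∈ Set.Icc (-C0) (-D0)
            ∧ (((-(Real.sqrt 3)/2) + 0) * x 0 + ((1:ℝ)/2 + -1) * x 1) ∈ Set.Icc D2 C2 := by
          intro x hx
          refine ⟨?_, ?_, ?_⟩
          · rw [show (-(Real.sqrt 3)/2) * x 0 + (1/2) * x 1 = f1 x by rw [happ1]]
            exact hmem1 x hx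
          · rw [show (0:ℝ) * x 0 + (-1) * x 1 = -(f0 x) by rw [happ0]; ring]
            have h0 := hmem0 x hx
            exact ⟨neg_le_neg h0.2, neg_le_neg h0.1⟩
          · rw [show ((-(Real.sqrt 3)/2) + 0) * x 0 + ((1:ℝ)/2 + -1) * x 1 = f2 x by
              rw [happ2]; ring]
            exact hmem2 x hx
        have h := slab_volume S (-(Real.sqrt 3)/2) (1/2) 0 (-1) D1 C1 (-C0) (-D0) D2 C2
          habs hmem hDC1 (by linarith) hDC2 hc3.2 (by linarith)
        rw [show (C1-D1) + (-D0 - -C0) + (C2-D2) = (C0-D0) + (C1-D1) + (C2-D2) by ring] at h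
        exact h
  -- final arithmetic
  have hA : (volume S).toReal ≤ 2 / Real.sqrt 3 * (((C0-D0) + (C1-D1) + (C2-D2))^2 / 12) :=
    ENNReal.toReal_le_of_le_ofReal (by positivity) hvolS
  have hWnn : 0 ≤ (C0-D0) + (C1-D1) + (C2-D2) := by linarith
  have hXnn : 0 ≤ Real.sqrt 3 * b + (2 - Real.sqrt 3) * lam := by
    have e1 := mul_nonneg h3.le hb0
    have e2 := mul_nonneg (by linarith : (0:ℝ) ≤ 2 - Real.sqrt 3) hlam0
    linarith
  have hsq : (2*((C0-D0) + (C1-D1) + (C2-D2)))^2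
      ≤ (Real.sqrt 3 * b + (2 - Real.sqrt 3) * lam)^2 :=
    pow_le_pow_left₀ (by linarith) htot 2
  have hstep1 : 8 * Real.sqrt 3 * (volume S).toReal
      ≤ (4/3) * ((C0-D0) + (C1-D1) + (C2-D2))^2 := by
    have h8 : 8 * Real.sqrt 3 * (2 / Real.sqrt 3 * (((C0-D0) + (C1-D1) + (C2-D2))^2 / 12))
        = (4/3) * ((C0-D0) + (C1-D1) + (C2-D2))^2 := by
      field_simp
      ring
    calc 8 * Real.sqrt 3 * (volume S).toReal
        ≤ 8 * Real.sqrt 3 * (2 / Real.sqrt 3 * (((C0-D0) + (C1-D1) + (C2-D2))^2 / 12)) := by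
          apply mul_le_mul_of_nonneg_left hA (by positivity)
      _ = _ := h8
  have hstep2 : (4/3) * ((C0-D0) + (C1-D1) + (C2-D2))^2
      ≤ (1/3) * (Real.sqrt 3 * b + (2 - Real.sqrt 3) * lam)^2 := by
    have e1 : (2*((C0-D0) + (C1-D1) + (C2-D2)))^2 = 4*((C0-D0) + (C1-D1) + (C2-D2))^2 := by ring
    linarith [hsq]
  have hstep3 : (1/3) * (Real.sqrt 3 * b + (2 - Real.sqrt 3) * lam)^2
      = (b + (2 * Real.sqrt 3 / 3 - 1) * lam)^2 := by
    linear_combination (b^2/3 - 2*b*lam/3 - lam^2/9) * h3sq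
  have hcoef : (0:ℝ) ≤ 2 * Real.sqrt 3 / 3 - 1 := by linarith
  have hstep4 : (b + (2 * Real.sqrt 3 / 3 - 1) * lam)^2
      ≤ (b + (2 * Real.sqrt 3 / 3 - 1) * bstar)^2 := by
    apply pow_le_pow_left₀
    · have := mul_nonneg hcoef hlam0
      linarith
    · have := mul_le_mul_of_nonneg_left hlamb hcoef
      linarith
  have hdiv : 2 / Real.sqrt 3 - 1 = 2 * Real.sqrt 3 / 3 - 1 := by
    have h' : 2 / Real.sqrt 3 = 2 * Real.sqrt 3 / 3 := by
      rw [div_eq_div_iff h3.ne' (by norm_num : (3:ℝ) ≠ 0)]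
      linear_combination (-2) * h3sq
    rw [h']
  rw [hdiv]
  linarith
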